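/- arXiv:1408.0918 — 6 statements merged into one kernel-verified Lean document; each statement's English description precedes it below -/
import Mathlib

section
/- The pairs σ = (σ₁, σ₀) and τ = (τ₁, τ₀) are chain maps between the two-term complexes A_*(G) and B_*(G): that is, d ∘ σ₁ = σ₀ ∘ ∂ and ∂ ∘ τ₁ = τ₀ ∘ d as group homomorphisms. -/
/-!
`G = (V, E, s, r)` is a countable row-finite directed graph.  Row-finiteness is
encoded by a function `out : V → Finset E` with `e ∈ out v ↔ s e = v`.
Sinks are the vertices `v` with `out v = ∅`; the free abelian group on a set `X`
is modelled as `X →₀ ℤ`, with `x ∈ X` identified with `Finsupp.single x 1`.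
-/

open scoped Classical

noncomputable section

variable {V E : Type*}

/-- The boundary map `∂ : ℤV_ns → ℤV`, `∂(v) = (∑_{s(e)=v} r(e)) - v`. -/
def delMap (r : E → V) (out : V → Finset E) :
    ({v : V // out v ≠ ∅} →₀ ℤ) →ₗ[ℤ] (V →₀ ℤ) :=
  Finsupp.lift _ ℤ _ fun v =>
    (∑ e ∈ out v.1, Finsupp.single (r e) (1 : ℤ)) - Finsupp.single v.1 1

/-- The boundary map `d : ℤE → ℤ[E ⊔ V_s]`. -/
def dMap (r : E → V) (out : V → Finset E) :
    (E →₀ ℤ) →ₗ[ℤ] ((E ⊕ {v : V // out v = ∅}) →₀ ℤ) :=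
  Finsupp.lift _ ℤ _ fun e =>
    (if h : out (r e) = ∅ then Finsupp.single (Sum.inr ⟨r e, h⟩) (1 : ℤ)
      else ∑ f ∈ out (r e), Finsupp.single (Sum.inl f) (1 : ℤ)) -
      Finsupp.single (Sum.inl e) 1

/-- `σ₁ : ℤV_ns → ℤE`, `σ₁(v) = ∑_{s(e)=v} e`. -/
def sigma1 (out : V → Finset E) :
    ({v : V // out v ≠ ∅} →₀ ℤ) →ₗ[ℤ] (E →₀ ℤ) :=
  Finsupp.lift _ ℤ _ fun v => ∑ e ∈ out v.1, Finsupp.single e (1 : ℤ)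

/-- `σ₀ : ℤV → ℤ[E ⊔ V_s]`. -/
def sigma0 (out : V → Finset E) :
    (V →₀ ℤ) →ₗ[ℤ] ((E ⊕ {v : V // out v = ∅}) →₀ ℤ) :=
  Finsupp.lift _ ℤ _ fun v =>
    if h : out v = ∅ then Finsupp.single (Sum.inr ⟨v, h⟩) (1 : ℤ)
    else ∑ e ∈ out v, Finsupp.single (Sum.inl e) (1 : ℤ)

/-- `τ₁ : ℤE → ℤV_ns`, `τ₁(e) = r(e)` if `r(e)` is not a sink, else `0`. -/
def tau1 (r : E → V) (out : V → Finset E) :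
    (E →₀ ℤ) →ₗ[ℤ] ({v : V // out v ≠ ∅} →₀ ℤ) :=
  Finsupp.lift _ ℤ _ fun e =>
    if h : out (r e) ≠ ∅ then Finsupp.single (⟨r e, h⟩ : {v : V // out v ≠ ∅}) (1 : ℤ) else 0

/-- `τ₀ : ℤ[E ⊔ V_s] → ℤV`, `τ₀(e) = r(e)` and `τ₀(v) = v`. -/
def tau0 (r : E → V) (out : V → Finset E) :
    ((E ⊕ {v : V // out v = ∅}) →₀ ℤ) →ₗ[ℤ] (V →₀ ℤ) :=
  Finsupp.lift _ ℤ _ (Sum.elim (fun e => Finsupp.single (r e) (1 : ℤ))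
    (fun v => Finsupp.single v.1 (1 : ℤ)))

lemma lift_single' {X Y : Type*} (f : X → (Y →₀ ℤ)) (x : X) :
    (Finsupp.lift (Y →₀ ℤ) ℤ X f) (Finsupp.single x 1) = f x := by
  simp [Finsupp.lift_apply, Finsupp.sum_single_index]

/-- The pairs `σ = (σ₁, σ₀)` and `τ = (τ₁, τ₀)` are chain maps between the two-term
complexes `A_*(G)` and `B_*(G)`:  `d ∘ σ₁ = σ₀ ∘ ∂` and `∂ ∘ τ₁ = τ₀ ∘ d`. -/
theorem sigma_tau_chain_maps [Countable V] [Countable E]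
    (s r : E → V) (out : V → Finset E)
    (hout : ∀ (v : V) (e : E), e ∈ out v ↔ s e = v) :
    (dMap r out).comp (sigma1 out) = (sigma0 out).comp (delMap r out) ∧
    (delMap r out).comp (tau1 r out) = (tau0 r out).comp (dMap r out) := by
  constructor
  · apply Finsupp.lhom_ext'
    intro v
    apply LinearMap.ext_ring
    have hv := v.2
    simp only [LinearMap.comp_apply, Finsupp.lsingle_apply, sigma1, delMap, lift_single']
    rw [map_sum, map_sub, map_sum]
    simp only [dMap, sigma0, lift_single']
    rw [dif_neg hv, Finset.sum_sub_distrib]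
  · apply Finsupp.lhom_ext'
    intro e
    apply LinearMap.ext_ring
    simp only [LinearMap.comp_apply, Finsupp.lsingle_apply, tau1, dMap, lift_single']
    by_cases h : out (r e) = ∅
    · rw [dif_neg (by simpa using h), dif_pos h, map_zero, map_sub]
      simp only [tau0, lift_single', Sum.elim_inr, Sum.elim_inl]
      simp
    · rw [dif_pos h, dif_neg h, map_sub, map_sum]
      simp only [delMap, tau0, lift_single', Sum.elim_inl]
end
end

section
/- Let k : ℤV → ℤV_ns be the homomorphism with k(v) = v for v ∈ V_ns and k(v) = 0 for v ∈ V_s. Then k is a chain homotopy from τ ∘ σ to the identity on A_*(G): namely ∂ ∘ k = τ₀ ∘ σ₀ − id on ℤV, and k ∘ ∂ = τ₁ ∘ σ₁ − id on ℤV_ns. -/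
/-!
`G = (V, E, s, r)` is a countable row-finite directed graph.  Row-finiteness is
encoded by a function `out : V → Finset E` with `e ∈ out v ↔ s e = v`.
Sinks are the vertices `v` with `out v = ∅`; the free abelian group on a set `X`
is modelled as `X →₀ ℤ`, with `x ∈ X` identified with `Finsupp.single x 1`.
-/

open scoped Classical

noncomputable section

variable {V E : Type*}

/-- The homotopy `k : ℤV → ℤV_ns`, `k(v) = v` if `v ∈ V_ns`, `k(v) = 0` if `v` is a sink. -/
def kMap (out : V → Finset E) :
    (V →₀ ℤ) →ₗ[ℤ] ({v : V // out v ≠ ∅} →₀ ℤ) :=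
  Finsupp.lift _ ℤ _ fun v =>
    if h : out v ≠ ∅ then Finsupp.single (⟨v, h⟩ : {v : V // out v ≠ ∅}) (1 : ℤ) else 0

/-- `k` is a chain homotopy from `τ ∘ σ` to the identity on `A_*(G)`:
`∂ ∘ k = τ₀ ∘ σ₀ − id` and `k ∘ ∂ = τ₁ ∘ σ₁ − id`. -/
theorem k_homotopy_tau_sigma_to_id [Countable V] [Countable E]
    (s r : E → V) (out : V → Finset E)
    (hout : ∀ (v : V) (e : E), e ∈ out v ↔ s e = v) :
    (delMap r out).comp (kMap out) = (tau0 r out).comp (sigma0 out) - LinearMap.id ∧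
    (kMap out).comp (delMap r out) = (tau1 r out).comp (sigma1 out) - LinearMap.id := by
  have hk : ∀ v : V, kMap out (Finsupp.single v 1) =
      if h : out v ≠ ∅ then Finsupp.single (⟨v, h⟩ : {v : V // out v ≠ ∅}) 1 else 0 :=
    fun v => by simp [kMap, Finsupp.lift_apply, Finsupp.sum_single_index]
  have hdel : ∀ v : {v : V // out v ≠ ∅}, delMap r out (Finsupp.single v 1) =
      (∑ e ∈ out v.1, Finsupp.single (r e) (1 : ℤ)) - Finsupp.single v.1 1 :=
    fun v => by simp [delMap, Finsupp.lift_apply, Finsupp.sum_single_index]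
  have hs0 : ∀ v : V, sigma0 (E := E) out (Finsupp.single v 1) =
      if h : out v = ∅ then Finsupp.single (Sum.inr ⟨v, h⟩) (1 : ℤ)
      else ∑ e ∈ out v, Finsupp.single (Sum.inl e) (1 : ℤ) :=
    fun v => by simp [sigma0, Finsupp.lift_apply, Finsupp.sum_single_index]
  have hs1 : ∀ v : {v : V // out v ≠ ∅}, sigma1 out (Finsupp.single v 1) =
      ∑ e ∈ out v.1, Finsupp.single e (1 : ℤ) :=
    fun v => by simp [sigma1, Finsupp.lift_apply, Finsupp.sum_single_index]
  have ht0l : ∀ e : E, tau0 (V := V) r out (Finsupp.single (Sum.inl e) 1) =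
      Finsupp.single (r e) (1 : ℤ) := fun e => by simp [tau0, Finsupp.lift_apply, Finsupp.sum_single_index]
  have ht0r : ∀ w : {v : V // out v = ∅}, tau0 (V := V) r out
      (Finsupp.single (Sum.inr w) 1) = Finsupp.single w.1 (1 : ℤ) :=
    fun w => by simp [tau0, Finsupp.lift_apply, Finsupp.sum_single_index]
  have ht1 : ∀ e : E, tau1 r out (Finsupp.single e 1) =
      if h : out (r e) ≠ ∅ then Finsupp.single (⟨r e, h⟩ : {v : V // out v ≠ ∅}) (1 : ℤ)
      else 0 := fun e => by simp [tau1, Finsupp.lift_apply, Finsupp.sum_single_index]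
  constructor
  · apply Finsupp.lhom_ext'
    intro v
    apply LinearMap.ext_ring
    simp only [LinearMap.comp_apply, Finsupp.lsingle_apply, LinearMap.sub_apply,
      LinearMap.id_apply]
    rw [hk, hs0]
    by_cases h : out v = ∅
    · simp [h, ht0r]
    · simp [h, hdel, map_sum, ht0l]
  · apply Finsupp.lhom_ext'
    intro v
    apply LinearMap.ext_ring
    simp only [LinearMap.comp_apply, Finsupp.lsingle_apply, LinearMap.sub_apply,
      LinearMap.id_apply]
    rw [hdel, hs1, map_sub, map_sum, map_sum]
    simp [hk, ht1, v.2]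
end
end

section
/- The dual map σ₀^∨ restricts to a group isomorphism ker d^∨ → ker ∂^∨, and the dual map σ₁^∨ induces a group isomorphism (E → ℤ) / image(d^∨) → (V_ns → ℤ) / image(∂^∨). (In other words, the dual cochain map σ^∨ induces isomorphisms in cohomology of the dual two-term cochain complexes.) -/
/-!
`G = (V, E, s, r)` is a countable row-finite directed graph.  Row-finiteness is
encoded by a function `out : V → Finset E` with `e ∈ out v ↔ s e = v`.
Sinks are the vertices `v` with `out v = ∅`.  For a set `X`, the abelian group of
all functions `X → ℤ` carries its pointwise structure.
-/

open scoped Classical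

noncomputable section

variable {V E : Type*}

/-- The dual coboundary `∂^∨ : (V → ℤ) → (V_ns → ℤ)`,
`(∂^∨ η)(v) = (∑_{s(e)=v} η(r(e))) − η(v)`. -/
def dualDel (r : E → V) (out : V → Finset E) :
    (V → ℤ) →ₗ[ℤ] ({v : V // out v ≠ ∅} → ℤ) :=
  (AddMonoidHom.mk' (fun η v => (∑ e ∈ out v.1, η (r e)) - η v.1) (by
    intro a b
    funext v
    simp [Finset.sum_add_distrib]
    ring)).toIntLinearMap

/-- The dual coboundary `d^∨ : ((E ⊔ V_s) → ℤ) → (E → ℤ)`. -/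
def dualD (r : E → V) (out : V → Finset E) :
    ((E ⊕ {v : V // out v = ∅}) → ℤ) →ₗ[ℤ] (E → ℤ) :=
  (AddMonoidHom.mk' (fun η e =>
      (if h : out (r e) = ∅ then η (Sum.inr ⟨r e, h⟩)
        else ∑ f ∈ out (r e), η (Sum.inl f)) - η (Sum.inl e)) (by
    intro a b
    funext e
    by_cases h : out (r e) = ∅ <;> simp [h, Finset.sum_add_distrib] <;> ring)).toIntLinearMap

/-- `σ₁^∨ : (E → ℤ) → (V_ns → ℤ)`, `(σ₁^∨ η)(v) = ∑_{s(e)=v} η(e)`. -/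
def dualSigma1 (out : V → Finset E) :
    (E → ℤ) →ₗ[ℤ] ({v : V // out v ≠ ∅} → ℤ) :=
  (AddMonoidHom.mk' (fun η v => ∑ e ∈ out v.1, η e) (by
    intro a b
    funext v
    simp [Finset.sum_add_distrib])).toIntLinearMap

/-- `σ₀^∨ : ((E ⊔ V_s) → ℤ) → (V → ℤ)`. -/
def dualSigma0 (out : V → Finset E) :
    ((E ⊕ {v : V // out v = ∅}) → ℤ) →ₗ[ℤ] (V → ℤ) :=
  (AddMonoidHom.mk' (fun η v =>
      if h : out v = ∅ then η (Sum.inr ⟨v, h⟩) else ∑ e ∈ out v, η (Sum.inl e)) (by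
    intro a b
    funext v
    by_cases h : out v = ∅ <;> simp [h, Finset.sum_add_distrib])).toIntLinearMap

namespace DualSigmaAux

variable (s r : E → V) (out : V → Finset E)

lemma dualDel_apply (η : V → ℤ) (v : {v : V // out v ≠ ∅}) :
    dualDel r out η v = (∑ e ∈ out v.1, η (r e)) - η v.1 := rfl

lemma dualD_apply (η : (E ⊕ {v : V // out v = ∅}) → ℤ) (e : E) :
    dualD r out η e =
      (if h : out (r e) = ∅ then η (Sum.inr ⟨r e, h⟩)
        else ∑ f ∈ out (r e), η (Sum.inl f)) - η (Sum.inl e) := rfl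

lemma dualSigma1_apply (η : E → ℤ) (v : {v : V // out v ≠ ∅}) :
    dualSigma1 out η v = ∑ e ∈ out v.1, η e := rfl

lemma dualSigma0_apply (η : (E ⊕ {v : V // out v = ∅}) → ℤ) (v : V) :
    dualSigma0 out η v =
      if h : out v = ∅ then η (Sum.inr ⟨v, h⟩) else ∑ e ∈ out v, η (Sum.inl e) := rfl

/-- `σ^∨` is a chain map: `σ₁^∨ ∘ d^∨ = ∂^∨ ∘ σ₀^∨`. -/
lemma chain (χ : (E ⊕ {v : V // out v = ∅}) → ℤ) :
    dualSigma1 out (dualD r out χ) = dualDel r out (dualSigma0 out χ) := by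
  funext v
  simp only [dualSigma1_apply, dualDel_apply, dualSigma0_apply, dualD_apply,
    Finset.sum_sub_distrib, dif_neg v.2]

/-- `ker σ₁^∨ ⊆ range d^∨`. -/
lemma ker_sigma1_le_range (ζ : E → ℤ) (hζ : dualSigma1 out ζ = 0) :
    ζ ∈ LinearMap.range (dualD r out) := by
  refine ⟨Sum.elim (fun e => -ζ e) (fun _ => 0), ?_⟩
  funext e
  rw [dualD_apply]
  by_cases h : out (r e) = ∅
  · simp [h]
  · have := congrFun hζ ⟨r e, h⟩
    rw [dualSigma1_apply] at this
    simp only [Pi.zero_apply] at this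
    simp only [dif_neg h, Sum.elim_inl]
    rw [Finset.sum_neg_distrib, this]
    ring

/-- The backwards map for kernels: `ζ ↦ Sum.elim (ζ ∘ r) (ζ ∘ val)`. -/
def phi : (V → ℤ) →ₗ[ℤ] ((E ⊕ {v : V // out v = ∅}) → ℤ) :=
  (AddMonoidHom.mk' (fun ζ => Sum.elim (fun e => ζ (r e)) (fun v => ζ v.1)) (by
    intro a b
    funext x
    cases x <;> simp)).toIntLinearMap

lemma phi_apply (ζ : V → ℤ) :
    phi r out ζ = Sum.elim (fun e => ζ (r e)) (fun v => ζ v.1) := rfl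

/-- A chosen edge out of each non-sink. -/
def pick (v : V) (h : out v ≠ ∅) : E :=
  (Finset.nonempty_iff_ne_empty.mpr h).choose

lemma pick_mem (v : V) (h : out v ≠ ∅) : pick out v h ∈ out v :=
  (Finset.nonempty_iff_ne_empty.mpr h).choose_spec

/-- The backwards map for quotients: a section of `σ₁^∨`. -/
def tau : ({v : V // out v ≠ ∅} → ℤ) →ₗ[ℤ] (E → ℤ) :=
  (AddMonoidHom.mk' (fun ξ e =>
      if h : out (s e) = ∅ then 0
      else if e = pick out (s e) h then ξ ⟨s e, h⟩ else 0) (by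
    intro a b
    funext e
    by_cases h : out (s e) = ∅
    · simp [h]
    · simp only [h, dif_neg, not_false_iff, Pi.add_apply]
      split <;> simp)).toIntLinearMap

lemma tau_apply (ξ : {v : V // out v ≠ ∅} → ℤ) (e : E) :
    tau s out ξ e =
      if h : out (s e) = ∅ then 0
      else if e = pick out (s e) h then ξ ⟨s e, h⟩ else 0 := rfl

variable (hout : ∀ (v : V) (e : E), e ∈ out v ↔ s e = v)

include hout in
lemma sigma1_tau (ξ : {v : V // out v ≠ ∅} → ℤ) :
    dualSigma1 out (tau s out ξ) = ξ := by
  funext v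
  rw [dualSigma1_apply]
  have hsum : ∀ e ∈ out v.1,
      tau s out ξ e = if e = pick out v.1 v.2 then ξ v else 0 := by
    intro e he
    have hse : s e = (v : V) := (hout v.1 e).mp he
    rw [tau_apply]
    have key : ∀ (w : V), w = (v : V) →
        (if h : out w = ∅ then 0 else if e = pick out w h then ξ ⟨w, h⟩ else 0) =
          if e = pick out v.1 v.2 then ξ v else 0 := by
      rintro w rfl
      rw [dif_neg v.2]
    exact key (s e) hse
  rw [Finset.sum_congr rfl hsum, Finset.sum_ite_eq' _ _ (fun _ => ξ v),
    if_pos (pick_mem out v.1 v.2)]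

include hout in
/-- `τ` maps `range ∂^∨` into `range d^∨`. -/
lemma tau_range (ζ : {v : V // out v ≠ ∅} → ℤ)
    (hζ : ζ ∈ LinearMap.range (dualDel r out)) :
    tau s out ζ ∈ LinearMap.range (dualD r out) := by
  obtain ⟨η, rfl⟩ := hζ
  -- a preimage of `η` under `σ₀^∨`
  set χ : (E ⊕ {v : V // out v = ∅}) → ℤ :=
    Sum.elim (fun e =>
      if h : out (s e) = ∅ then 0
      else if e = pick out (s e) h then η (s e) else 0) (fun v => η v.1) with hχ
  have hσχ : dualSigma0 out χ = η := by
    funext v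
    rw [dualSigma0_apply]
    by_cases h : out v = ∅
    · simp [h, hχ]
    · simp only [h, dif_neg, not_false_iff]
      have hsum : ∀ e ∈ out v, χ (Sum.inl e) = if e = pick out v h then η v else 0 := by
        intro e he
        have hse : s e = v := (hout v e).mp he
        simp only [hχ, Sum.elim_inl]
        have key : ∀ (w : V), w = v →
            (if h' : out w = ∅ then 0 else if e = pick out w h' then η w else 0) =
              if e = pick out v h then η v else 0 := by
          rintro w rfl
          rw [dif_neg h]
        exact key (s e) hse
      rw [Finset.sum_congr rfl hsum, Finset.sum_ite_eq' _ _ (fun _ => η v),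
        if_pos (pick_mem out v h)]
  have hkey : dualSigma1 out (tau s out (dualDel r out η) - dualD r out χ) = 0 := by
    rw [map_sub, sigma1_tau s out hout, chain, hσχ, sub_self]
  have h1 := ker_sigma1_le_range r out _ hkey
  have h2 : dualD r out χ ∈ LinearMap.range (dualD r out) := ⟨χ, rfl⟩
  have := Submodule.add_mem _ h1 h2
  simpa using this

end DualSigmaAux

/-- The dual map `σ₀^∨` restricts to a group isomorphism `ker d^∨ → ker ∂^∨`, and
`σ₁^∨` induces a group isomorphism `(E → ℤ)/image d^∨ → (V_ns → ℤ)/image ∂^∨`;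
that is, the dual cochain map `σ^∨` induces isomorphisms in cohomology of the dual
two-term cochain complexes. -/
theorem dual_sigma_cohomology_iso [Countable V] [Countable E]
    (s r : E → V) (out : V → Finset E)
    (hout : ∀ (v : V) (e : E), e ∈ out v ↔ s e = v) :
    (∃ f : LinearMap.ker (dualD r out) ≃ₗ[ℤ] LinearMap.ker (dualDel r out),
        ∀ x : LinearMap.ker (dualD r out), (f x : V → ℤ) = dualSigma0 out x) ∧
    (∃ g : ((E → ℤ) ⧸ LinearMap.range (dualD r out)) ≃ₗ[ℤ]
        (({v : V // out v ≠ ∅} → ℤ) ⧸ LinearMap.range (dualDel r out)),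
        ∀ x : E → ℤ,
          g (Submodule.Quotient.mk x) = Submodule.Quotient.mk (dualSigma1 out x)) := by
  classical
  open DualSigmaAux in
  constructor
  · -- kernels
    have h1 : ∀ x ∈ LinearMap.ker (dualD r out),
        dualSigma0 out x ∈ LinearMap.ker (dualDel r out) := by
      intro x hx
      rw [LinearMap.mem_ker] at hx ⊢
      rw [← chain r out, hx, map_zero]
    have h2 : ∀ x ∈ LinearMap.ker (dualDel r out),
        phi r out x ∈ LinearMap.ker (dualD r out) := by
      intro ζ hζ
      rw [LinearMap.mem_ker] at hζ ⊢
      funext e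
      rw [dualD_apply, phi_apply]
      by_cases h : out (r e) = ∅
      · simp [h]
      · have := congrFun hζ ⟨r e, h⟩
        rw [dualDel_apply] at this
        simp only [h, dif_neg, not_false_iff, Sum.elim_inl, Pi.zero_apply] at this ⊢
        linarith [this]
    refine ⟨LinearEquiv.ofLinear ((dualSigma0 out).restrict h1)
      ((phi r out).restrict h2) ?_ ?_, fun x => rfl⟩
    · -- σ₀^∨ ∘ φ = id on ker ∂^∨
      apply LinearMap.ext; intro ζ; apply Subtype.ext
      have hζ : dualDel r out (ζ : V → ℤ) = 0 := ζ.2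
      show dualSigma0 out (phi r out (ζ : V → ℤ)) = (ζ : V → ℤ)
      funext v
      rw [dualSigma0_apply]
      by_cases h : out v = ∅
      · simp [h, phi_apply]
      · have := congrFun hζ ⟨v, h⟩
        rw [dualDel_apply] at this
        simp only [h, dif_neg, not_false_iff, phi_apply, Sum.elim_inl, Pi.zero_apply] at this ⊢
        linarith [this]
    · -- φ ∘ σ₀^∨ = id on ker d^∨
      apply LinearMap.ext; intro η; apply Subtype.ext
      have hη : dualD r out (η : (E ⊕ {v : V // out v = ∅}) → ℤ) = 0 := η.2
      show phi r out (dualSigma0 out (η : (E ⊕ {v : V // out v = ∅}) → ℤ))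
        = (η : (E ⊕ {v : V // out v = ∅}) → ℤ)
      funext x
      cases x with
      | inl e =>
        have := congrFun hη e
        rw [dualD_apply] at this
        rw [phi_apply, Sum.elim_inl, dualSigma0_apply]
        have h' := sub_eq_zero.mp this
        exact h'
      | inr v =>
        rw [phi_apply, Sum.elim_inr, dualSigma0_apply, dif_pos v.2]
  · -- quotients
    have hAB : LinearMap.range (dualD r out) ≤
        Submodule.comap (dualSigma1 out) (LinearMap.range (dualDel r out)) := by
      rintro x ⟨χ, rfl⟩
      exact ⟨dualSigma0 out χ, (chain r out χ).symm⟩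
    have hBA : LinearMap.range (dualDel r out) ≤
        Submodule.comap (tau s out) (LinearMap.range (dualD r out)) :=
      fun ζ hζ => tau_range s r out hout ζ hζ
    refine ⟨LinearEquiv.ofLinear
      (Submodule.mapQ _ _ (dualSigma1 out) hAB)
      (Submodule.mapQ _ _ (tau s out) hBA) ?_ ?_, fun x => ?_⟩
    · apply Submodule.linearMap_qext
      ext ξ
      simp only [LinearMap.comp_apply, Submodule.mkQ_apply, Submodule.mapQ_apply,
        LinearMap.id_comp, LinearMap.id_apply]
      rw [sigma1_tau s out hout]
    · apply Submodule.linearMap_qext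
      ext ζ
      simp only [LinearMap.comp_apply, Submodule.mkQ_apply, Submodule.mapQ_apply,
        LinearMap.id_comp, LinearMap.id_apply]
      rw [Submodule.Quotient.eq]
      apply ker_sigma1_le_range
      rw [map_sub, sigma1_tau s out hout, sub_self]
    · rw [LinearEquiv.ofLinear_apply, Submodule.mapQ_apply]
end
end

section
/- Let d ≥ 1 be an integer, let a₀, …, a_{d−1} be integers, and set b = a₀ + … + a_{d−1}. Then there exists a bijection F from the disjoint union ⊔_{i=0}^{d−1} {n ∈ ℤ : n ≥ a_i} onto {m ∈ ℤ : m ≥ b} such that for each i ∈ {0, …, d−1}, F(i, n) = i + n·d for all but finitely many n with n ≥ a_i. In particular, the functions f_i(n) = F(i, n) are injective on {n ≥ a_i}, have pairwise disjoint images, their images cover {m ≥ b}, and each f_i agrees with n ↦ i + n·d outside a finite set. -/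
open Classical in
/-- Patch two sets into a bijection that is the identity on the intersection. -/
noncomputable def patchEquiv {α : Type*} {S T : Set α} (e : ↥(S \ T) ≃ ↥(T \ S)) : ↥S ≃ ↥T where
  toFun x := if h : (x : α) ∈ T then ⟨x, h⟩ else ⟨e ⟨x, ⟨x.2, h⟩⟩, (e ⟨x, ⟨x.2, h⟩⟩).2.1⟩
  invFun y := if h : (y : α) ∈ S then ⟨y, h⟩ else ⟨e.symm ⟨y, ⟨y.2, h⟩⟩, (e.symm ⟨y, ⟨y.2, h⟩⟩).2.1⟩
  left_inv x := by
    by_cases h : (x : α) ∈ T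
    · simp [h, x.2]
    · have h2 : ((e ⟨x, ⟨x.2, h⟩⟩ : ↥(T \ S)) : α) ∉ S := (e ⟨x, ⟨x.2, h⟩⟩).2.2
      simp only [dif_neg h, dif_neg h2]
      ext
      simp only [Subtype.coe_eta]
      rw [Equiv.symm_apply_apply]
  right_inv y := by
    by_cases h : (y : α) ∈ S
    · simp [h, y.2]
    · have h2 : ((e.symm ⟨y, ⟨y.2, h⟩⟩ : ↥(S \ T)) : α) ∉ T := (e.symm ⟨y, ⟨y.2, h⟩⟩).2.2
      simp only [dif_neg h, dif_neg h2]
      ext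
      simp only [Subtype.coe_eta]
      rw [Equiv.apply_symm_apply]

theorem patchEquiv_eq {α : Type*} {S T : Set α} (e : ↥(S \ T) ≃ ↥(T \ S)) (x : ↥S)
    (h : (x : α) ∈ T) : (patchEquiv e x : α) = x := by
  simp [patchEquiv, h]

/-- Let `d ≥ 1`, let `a₀, …, a_{d−1}` be integers with sum `b`.  Then there is a
bijection `F` from the disjoint union `⊔_{i<d} {n : ℤ | a i ≤ n}` onto
`{m : ℤ | b ≤ m}` such that for each `i`, `F ⟨i, n⟩ = i + n·d` for all but
finitely many `n ≥ a i`. -/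
theorem exists_bijection_of_sum (d : ℕ) (hd : 1 ≤ d) (a : Fin d → ℤ) (b : ℤ)
    (hb : b = ∑ i, a i) :
    ∃ F : ((i : Fin d) × {n : ℤ // a i ≤ n}) ≃ {m : ℤ // b ≤ m},
      ∀ i : Fin d,
        {n : {n : ℤ // a i ≤ n} | ((F ⟨i, n⟩ : ℤ)) ≠ (i : ℤ) + (n : ℤ) * d}.Finite := by
  classical
  have hd0 : (0:ℤ) < (d:ℤ) := by exact_mod_cast hd
  set G : ((i : Fin d) × {n : ℤ // a i ≤ n}) → ℤ := fun p => (p.1 : ℤ) + (p.2 : ℤ) * d with hGdef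
  -- key arithmetic fact: Euclidean uniqueness
  have key : ∀ (i j : Fin d) (n m : ℤ), (i:ℤ) + n*d = (j:ℤ) + m*d → (i:ℤ) = (j:ℤ) ∧ n = m := by
    intro i j n m h
    have hi : ((i:ℤ) + n*d) % d = (i:ℤ) := by
      rw [Int.add_mul_emod_self_right]
      exact Int.emod_eq_of_lt (by positivity) (by exact_mod_cast i.isLt)
    have hj : ((j:ℤ) + m*d) % d = (j:ℤ) := by
      rw [Int.add_mul_emod_self_right]
      exact Int.emod_eq_of_lt (by positivity) (by exact_mod_cast j.isLt)
    have hij : (i:ℤ) = (j:ℤ) := by rw [← hi, ← hj, h]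
    refine ⟨hij, ?_⟩
    have : n * (d:ℤ) = m * d := by omega
    exact mul_right_cancel₀ (ne_of_gt hd0) this
  have hGinj : Function.Injective G := by
    rintro ⟨i, n⟩ ⟨j, m⟩ h
    simp only [hGdef] at h
    obtain ⟨h1, h2⟩ := key i j n m h
    have hij : i = j := Fin.ext (by exact_mod_cast h1)
    subst hij
    have : n = m := Subtype.ext h2
    rw [this]
  -- constants
  set M : ℤ := ∑ i, |a i| with hMdef
  have hMa : ∀ i, |a i| ≤ M := fun i =>
    Finset.single_le_sum (fun j _ => abs_nonneg (a j)) (Finset.mem_univ i)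
  have hM0 : 0 ≤ M := Finset.sum_nonneg fun j _ => abs_nonneg (a j)
  set K : ℤ := M + |b| + 1 with hKdef
  have hKa : ∀ i, a i ≤ K := fun i => by
    have := hMa i; have := abs_nonneg b; have := le_abs_self (a i); omega
  have hKb : b < K := by have := le_abs_self b; omega
  have hK1 : 1 ≤ K := by have := abs_nonneg b; omega
  set N : ℤ := K * d with hNdef
  have hKN : K ≤ N := le_mul_of_one_le_right (by omega) (by exact_mod_cast hd)
  have hbN : b ≤ N := le_trans (le_of_lt hKb) hKN
  set A : Finset ℤ :=
    Finset.univ.biUnion (fun i : Fin d => (Finset.Ico (a i) K).image (fun n => (i:ℤ) + n*d))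
    with hAdef
  have hmemA : ∀ m : ℤ, m ∈ A ↔ ∃ i : Fin d, ∃ n : ℤ, a i ≤ n ∧ n < K ∧ (i:ℤ) + n*d = m := by
    intro m
    simp only [hAdef, Finset.mem_biUnion, Finset.mem_univ, true_and, Finset.mem_image,
      Finset.mem_Ico]
    constructor
    · rintro ⟨i, n, ⟨h1, h2⟩, h3⟩; exact ⟨i, n, h1, h2, h3⟩
    · rintro ⟨i, n, h1, h2, h3⟩; exact ⟨i, n, ⟨h1, h2⟩, h3⟩
  set S : Set ℤ := Set.range G with hSdef
  set T : Set ℤ := {m : ℤ | b ≤ m} with hTdef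
  -- (1) A ⊆ S
  have hAS : ∀ m : ℤ, m ∈ A → m ∈ S := by
    intro m hm
    obtain ⟨i, n, h1, _, h3⟩ := (hmemA m).1 hm
    exact ⟨⟨i, ⟨n, h1⟩⟩, h3⟩
  -- small-n bound: if i + n*d < K then n < K
  have hnK : ∀ (i : Fin d) (n : ℤ), (i:ℤ) + n*d < K → n < K := by
    intro i n h
    rcases le_or_gt 0 n with hn | hn
    · have h1 : n ≤ n * d := le_mul_of_one_le_right hn (by exact_mod_cast hd)
      have h2 : (0:ℤ) ≤ (i:ℤ) := by positivity
      omega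
    · omega
  -- (2) S below b is inside A
  have hSbA : ∀ m : ℤ, m ∈ S → m < b → m ∈ A := by
    rintro m ⟨⟨i, n⟩, rfl⟩ hmb
    have hmb' : (i:ℤ) + (n:ℤ)*d < b := hmb
    refine (hmemA _).2 ⟨i, n, n.2, ?_, rfl⟩
    exact hnK i n (by omega)
  -- (3) A is below N
  have hAN : ∀ m : ℤ, m ∈ A → m < N := by
    intro m hm
    obtain ⟨i, n, _, h2, h3⟩ := (hmemA m).1 hm
    have hi : (i:ℤ) < d := by exact_mod_cast i.isLt
    have : n * d ≤ (K - 1) * d := mul_le_mul_of_nonneg_right (by omega) (le_of_lt hd0)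
    rw [hNdef]; nlinarith
  -- (4) everything ≥ N is in S
  have hNS : ∀ m : ℤ, N ≤ m → m ∈ S := by
    intro m hm
    have hmod0 : 0 ≤ m % d := Int.emod_nonneg m (ne_of_gt hd0)
    have hmodd : m % d < d := Int.emod_lt_of_pos m hd0
    set i : Fin d := ⟨(m % d).toNat, by omega⟩ with hidef
    have hicoe : (i:ℤ) = m % d := by
      simp [hidef]
      omega
    have hdiv : K ≤ m / d := (Int.le_ediv_iff_mul_le hd0).2 (by rw [← hNdef]; exact hm)
    refine ⟨⟨i, ⟨m / d, le_trans (hKa i) hdiv⟩⟩, ?_⟩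
    show (i:ℤ) + (m / d) * d = m
    rw [hicoe]
    have := Int.emod_add_mul_ediv m d
    linarith [this, mul_comm (m / d) (d:ℤ)]
  -- (5) in [b, N) but not in A means not in S
  have hIcoA : ∀ m : ℤ, m < N → m ∉ A → m ∉ S := by
    rintro m hmN hmA ⟨⟨i, n⟩, rfl⟩
    apply hmA
    refine (hmemA _).2 ⟨i, n, n.2, ?_, rfl⟩
    have hi : (0:ℤ) ≤ (i:ℤ) := by positivity
    have : (n:ℤ) * d < K * d := by
      have : (i:ℤ) + (n:ℤ)*d < K * d := by rw [← hNdef]; exact hmN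
      omega
    exact lt_of_mul_lt_mul_right this (le_of_lt hd0)
  -- set identities
  have hST : S \ T = ↑(A \ Finset.Ico b N) := by
    ext m
    simp only [Set.mem_diff, hTdef, Set.mem_setOf_eq, Finset.coe_sdiff, Finset.mem_coe,
      Finset.mem_sdiff, Finset.mem_Ico, not_and, not_le, not_lt]
    constructor
    · intro ⟨h1, h2⟩
      exact ⟨hSbA m h1 (by omega), fun hbm => absurd hbm (by omega)⟩
    · intro ⟨h1, h2⟩
      have h3 := hAN m h1
      have h4 : m < b := by by_contra h; exact absurd h3 (not_lt.2 (h2 (by omega)))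
      exact ⟨hAS m h1, by omega⟩
  have hTS : T \ S = ↑(Finset.Ico b N \ A) := by
    ext m
    simp only [Set.mem_diff, hTdef, Set.mem_setOf_eq, Finset.coe_sdiff, Finset.mem_coe,
      Finset.mem_sdiff, Finset.mem_Ico]
    constructor
    · intro ⟨h1, h2⟩
      have hmN : m < N := by
        by_contra h
        exact h2 (hNS m (by omega))
      exact ⟨⟨h1, hmN⟩, fun hA => h2 (hAS m hA)⟩
    · intro ⟨⟨h1, h2⟩, h3⟩
      exact ⟨h1, hIcoA m h2 h3⟩
  -- cardinalities
  have hinj : ∀ i : Fin d, Function.Injective (fun n : ℤ => (i:ℤ) + n*d) := by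
    intro i n m h
    simp only at h
    exact (key i i n m h).2
  have hdisj : ∀ x ∈ Finset.univ, ∀ y ∈ Finset.univ, x ≠ y →
      Disjoint ((Finset.Ico (a x) K).image (fun n => (x:ℤ) + n*d))
        ((Finset.Ico (a y) K).image (fun n => (y:ℤ) + n*d)) := by
    intro x _ y _ hxy
    rw [Finset.disjoint_left]
    rintro m hmx hmy
    simp only [Finset.mem_image, Finset.mem_Ico] at hmx hmy
    obtain ⟨n, _, rfl⟩ := hmx
    obtain ⟨n', _, h2⟩ := hmy
    exact hxy (Fin.ext (by exact_mod_cast (key y x n' n h2).1)).symm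
  have hcardA : A.card = (N - b).toNat := by
    rw [hAdef, Finset.card_biUnion hdisj]
    have h1 : ∀ i : Fin d, ((Finset.Ico (a i) K).image (fun n => (i:ℤ) + n*d)).card
        = (K - a i).toNat := by
      intro i
      rw [Finset.card_image_of_injective _ (hinj i), Int.card_Ico]
    simp only [h1]
    have h2 : ((∑ i, (K - a i).toNat : ℕ) : ℤ) = N - b := by
      push_cast
      rw [Finset.sum_congr rfl (fun i _ => Int.toNat_of_nonneg (by linarith [hKa i]))]
      rw [Finset.sum_sub_distrib, Finset.sum_const, Finset.card_univ, Fintype.card_fin, hb,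
        hNdef]
      ring
    omega
  have hcardB : (Finset.Ico b N).card = (N - b).toNat := Int.card_Ico b N
  have hcard : (A \ Finset.Ico b N).card = (Finset.Ico b N \ A).card :=
    Finset.card_sdiff_comm (hcardA.trans hcardB.symm)
  -- the patching equivalence
  have e : ↥(S \ T) ≃ ↥(T \ S) :=
    (Equiv.setCongr hST).trans <|
      (Equiv.subtypeEquivRight (fun x => Finset.mem_coe)).trans <|
        (Finset.equivOfCardEq hcard).trans <|
          (Equiv.subtypeEquivRight (fun x => Finset.mem_coe)).symm.trans
            (Equiv.setCongr hTS.symm)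
  refine ⟨(Equiv.ofInjective G hGinj).trans (patchEquiv e), ?_⟩
  intro i
  apply Set.Finite.subset
    (Set.Finite.preimage (Set.injOn_of_injective Subtype.val_injective)
      (Set.finite_Ico (a i) K))
  intro n hn
  simp only [Set.mem_setOf_eq] at hn
  simp only [Set.mem_preimage, Set.mem_Ico]
  refine ⟨n.2, ?_⟩
  by_contra h
  push_neg at h
  apply hn
  have hx : ((Equiv.ofInjective G hGinj) ⟨i, n⟩ : ℤ) = (i:ℤ) + (n:ℤ)*d := by
    rw [Equiv.ofInjective_apply]
  have hmemT : ((Equiv.ofInjective G hGinj) ⟨i, n⟩ : ℤ) ∈ T := by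
    rw [hx, hTdef]
    simp only [Set.mem_setOf_eq]
    by_contra hc
    push_neg at hc
    exact absurd (hnK i n (by omega)) (not_lt.2 h)
  calc ((patchEquiv e ((Equiv.ofInjective G hGinj) ⟨i, n⟩) : ℤ))
      = ((Equiv.ofInjective G hGinj) ⟨i, n⟩ : ℤ) := patchEquiv_eq e _ hmemT
    _ = (i:ℤ) + (n:ℤ)*d := hx
end

section
/- Let H be a complex Hilbert space and let T : H → H be a bounded self-adjoint operator such that T² − T is a compact operator. Then there exists a bounded operator Q on H which is an orthogonal projection (Q = Q* = Q²) such that Q − T is a compact operator. -/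
/-!
The crux is a spectral gap: some `c ∈ (0, 1)` lies outside `σ(T)`. Otherwise, by spectral
mapping, every `c² - c` with `c ∈ (0, 1)` lies in the spectrum of the compact self-adjoint
operator `K = T² - T`, hence is an eigenvalue of `K` (Fredholm alternative). Unit eigenvectors for
distinct eigenvalues are orthogonal, so `K` would map infinitely many of them into a compact set
at pairwise distances `≥ 1/8`. Given the gap, the step function `χ = 1_{[c, ∞)}` is continuous on
`σ(T)`, so `Q = χ(T)` is a projection, and `χ(x) - x = g(x) (x² - x)` with `g` continuous on
`σ(T)`, so `Q - T = g(T) (T² - T)` is compact.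
-/

open Set Module End Polynomial
open scoped InnerProductSpace

theorem finite_of_isCompact_of_pairwise_le_dist {ι X : Type*} [MetricSpace X] {M : Set X}
    (hM : IsCompact M) {f : ι → X} (hfM : ∀ i, f i ∈ M) {ε : ℝ} (hε : 0 < ε)
    (hf : Pairwise fun i j => ε ≤ dist (f i) (f j)) : Finite ι := by
  let _ : TopologicalSpace ι := ⊥
  have : DiscreteTopology ι := ⟨rfl⟩
  have hcpt := (Metric.isClosedEmbedding_of_pairwise_le_dist hε hf).isCompact_preimage hM
  rw [show f ⁻¹' M = univ from eq_univ_of_forall hfM] at hcpt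
  exact finite_univ_iff.mp hcpt.finite_of_discrete

section Eigenvalues

variable {𝕜 E : Type*} [RCLike 𝕜] [NormedAddCommGroup E] [InnerProductSpace 𝕜 E]

theorem Module.End.HasEigenvalue.exists_mem_eigenspace_norm_eq_one {T : E →ₗ[𝕜] E} {μ : 𝕜}
    (hμ : HasEigenvalue T μ) : ∃ v ∈ eigenspace T μ, ‖v‖ = 1 := by
  obtain ⟨v, hv, hv0⟩ := hμ.exists_hasEigenvector
  exact ⟨(‖v‖⁻¹ : 𝕜) • v, Submodule.smul_mem _ _ (by simpa using hv), norm_smul_inv_norm hv0⟩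

theorem LinearMap.IsSymmetric.norm_le_norm_smul_sub_smul {T : E →ₗ[𝕜] E} (hT : T.IsSymmetric)
    {μ ν : 𝕜} (hμν : μ ≠ ν) {v w : E} (hv : v ∈ eigenspace T μ) (hw : w ∈ eigenspace T ν)
    (hv1 : ‖v‖ = 1) : ‖μ‖ ≤ ‖μ • v - ν • w‖ := by
  have horth : ⟪v, w⟫_𝕜 = 0 := hT.orthogonalFamily_eigenspaces hμν ⟨v, hv⟩ ⟨w, hw⟩
  have hinner : ⟪v, μ • v - ν • w⟫_𝕜 = μ := by
    simp [inner_sub_right, inner_smul_right, horth, inner_self_eq_norm_sq_to_K, hv1]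
  calc ‖μ‖ = ‖⟪v, μ • v - ν • w⟫_𝕜‖ := by rw [hinner]
    _ ≤ ‖μ • v - ν • w‖ := by simpa [hv1] using norm_inner_le_norm (𝕜 := 𝕜) v (μ • v - ν • w)

theorem IsCompactOperator.finite_setOf_hasEigenvalue_le_norm {K : E →L[𝕜] E}
    (hK : IsCompactOperator K) (hK' : (K : E →ₗ[𝕜] E).IsSymmetric) {δ : ℝ} (hδ : 0 < δ) :
    {μ : 𝕜 | HasEigenvalue (K : End 𝕜 E) μ ∧ δ ≤ ‖μ‖}.Finite := by
  choose v hv hv1 using fun μ : {μ : 𝕜 | HasEigenvalue (K : End 𝕜 E) μ ∧ δ ≤ ‖μ‖} =>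
    μ.2.1.exists_mem_eigenspace_norm_eq_one
  have hKv : ∀ μ, K (v μ) = (μ : 𝕜) • v μ := fun μ => mem_eigenspace_iff.mp (hv μ)
  obtain ⟨M, hM, hKM⟩ := hK.image_closedBall_subset_compact 1
  refine finite_coe_iff.mp <| finite_of_isCompact_of_pairwise_le_dist hM
    (f := fun μ => K (v μ)) (fun μ => hKM ⟨v μ, by simp [hv1], rfl⟩) hδ fun μ ν hμν => ?_
  show δ ≤ dist _ _
  rw [dist_eq_norm, hKv, hKv]
  exact μ.2.2.trans <|
    hK'.norm_le_norm_smul_sub_smul (Subtype.coe_ne_coe.mpr hμν) (hv μ) (hv ν) (hv1 μ)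

end Eigenvalues

theorem continuousOn_ite_lt {β : Type*} [TopologicalSpace β] {s : Set ℝ} {c : ℝ} (hc : c ∉ s)
    {f g : ℝ → β} (hf : ContinuousOn f (Iic c)) (hg : ContinuousOn g (Ici c)) :
    ContinuousOn (fun x => if x < c then f x else g x) s := by
  refine ContinuousOn.if (fun x ⟨hxs, hx⟩ => ?_) ?_ ?_
  · rw [show {x | x < c} = Iio c from rfl, frontier_Iio, mem_singleton_iff] at hx
    exact absurd (hx ▸ hxs) hc
  · exact hf.mono fun x hx => closure_lt_subset_le continuous_id continuous_const hx.2
  · exact hg.mono fun x hx => closure_minimal (fun y => le_of_not_gt) isClosed_Ici hx.2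

section SelfAdjoint

variable {H : Type*} [NormedAddCommGroup H] [InnerProductSpace ℂ H] [CompleteSpace H]
  {T : H →L[ℂ] H}

theorem IsSelfAdjoint.exists_notMem_spectrum_of_isCompactOperator_sq_sub
    (hT : IsSelfAdjoint T) (hK : IsCompactOperator ⇑(T ^ 2 - T)) :
    ∃ c ∈ Ioo (0 : ℝ) 1, c ∉ spectrum ℝ T := by
  by_contra! hsub
  have hK' : ((T ^ 2 - T : H →L[ℂ] H) : H →ₗ[ℂ] H).IsSymmetric :=
    ((hT.pow 2).sub hT).isSymmetric
  have heig : MapsTo (fun c : ℝ => ((c ^ 2 - c : ℝ) : ℂ)) (Ioo (1 / 4) (1 / 2))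
      {μ : ℂ | HasEigenvalue ((T ^ 2 - T : H →L[ℂ] H) : End ℂ H) μ ∧ 1 / 8 ≤ ‖μ‖} := by
    rintro c ⟨hc₁, hc₂⟩
    have hspec : c ^ 2 - c ∈ spectrum ℝ (T ^ 2 - T) := by
      have hc : c ∈ spectrum ℝ T := hsub c ⟨by linarith, by linarith⟩
      have := spectrum.subset_polynomial_aeval T (X ^ 2 - X) ⟨c, hc, rfl⟩
      simpa only [eval_sub, eval_pow, eval_X, map_sub, map_pow, aeval_X] using this
    have hneg : c ^ 2 - c < 0 := by nlinarith
    show HasEigenvalue _ ((c ^ 2 - c : ℝ) : ℂ) ∧ _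
    refine ⟨(hK.hasEigenvalue_iff_mem_spectrum (by exact_mod_cast hneg.ne)).mpr
      ((spectrum.algebraMap_mem_iff ℂ).mpr hspec), ?_⟩
    rw [Complex.norm_real, Real.norm_eq_abs, abs_of_neg hneg]
    nlinarith
  have hinj : InjOn (fun c : ℝ => ((c ^ 2 - c : ℝ) : ℂ)) (Ioo (1 / 4) (1 / 2)) := by
    rintro c ⟨-, hc⟩ d ⟨-, hd⟩ hcd
    have : (c - d) * (c + d - 1) = 0 := by linear_combination Complex.ofReal_injective hcd
    rcases mul_eq_zero.mp this with h | h <;> linarith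
  exact ((Ioo_infinite (by norm_num)).image hinj).mono heig.image_subset
    (hK.finite_setOf_hasEigenvalue_le_norm hK' (by norm_num))

theorem IsSelfAdjoint.isCompactOperator_cfc_sub_self (hT : IsSelfAdjoint T)
    (hK : IsCompactOperator ⇑(T ^ 2 - T)) {f g : ℝ → ℝ} (hf : ContinuousOn f (spectrum ℝ T))
    (hg : ContinuousOn g (spectrum ℝ T)) (hfg : ∀ x ∈ spectrum ℝ T, f x - x = g x * (x ^ 2 - x)) :
    IsCompactOperator ⇑(cfc f T - T) := by
  have hfactor : cfc f T - T = cfc g T * (T ^ 2 - T) :=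
    calc cfc f T - T = cfc (fun x => f x - x) T := by rw [cfc_sub f (fun x => x) T, cfc_id' ℝ T]
      _ = cfc (fun x => g x * (x ^ 2 - x)) T := cfc_congr hfg
      _ = cfc g T * (T ^ 2 - T) := by
        rw [cfc_mul g (fun x => x ^ 2 - x) T, cfc_sub (· ^ 2) (fun x => x) T, cfc_pow_id T 2,
          cfc_id' ℝ T]
  rw [hfactor]
  exact hK.clm_comp (cfc g T)

end SelfAdjoint

/-- Let `H` be a complex Hilbert space and `T` a bounded self-adjoint operator on `H`
such that `T² − T` is compact.  Then there is a bounded operator `Q` on `H` which is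
an orthogonal projection (`Q = Q* = Q²`) such that `Q − T` is compact. -/
theorem exists_projection_compact_perturbation
    {H : Type*} [NormedAddCommGroup H] [InnerProductSpace ℂ H] [CompleteSpace H]
    (T : H →L[ℂ] H) (hT : IsSelfAdjoint T)
    (hcpt : IsCompactOperator ⇑(T ^ 2 - T)) :
    ∃ Q : H →L[ℂ] H, IsSelfAdjoint Q ∧ Q ^ 2 = Q ∧ IsCompactOperator ⇑(Q - T) := by
  obtain ⟨c, ⟨hc₀, hc₁⟩, hc⟩ := hT.exists_notMem_spectrum_of_isCompactOperator_sq_sub hcpt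
  set χ : ℝ → ℝ := fun x => if x < c then 0 else 1
  have hχ : ContinuousOn χ (spectrum ℝ T) :=
    continuousOn_ite_lt hc continuousOn_const continuousOn_const
  refine ⟨cfc χ T, cfc_predicate χ T, ?_, ?_⟩
  · rw [sq, ← cfc_mul χ χ T]
    exact cfc_congr fun x _ => by simp only [χ]; split_ifs <;> norm_num
  · refine hT.isCompactOperator_cfc_sub_self hcpt hχ
      (g := fun x => if x < c then (1 - x)⁻¹ else -x⁻¹) (continuousOn_ite_lt hc ?_ ?_)
      fun x _ => ?_
    · exact ContinuousOn.inv₀ (f := fun x => 1 - x) (by fun_prop) fun x (hx : x ≤ c) => by linarith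
    · exact (ContinuousOn.inv₀ (f := fun x => x) (by fun_prop) fun x (hx : c ≤ x) => by linarith).neg
    · simp only [χ]
      split_ifs with hx
      · have : 1 - x ≠ 0 := by linarith
        field_simp
        ring
      · have : x ≠ 0 := by linarith
        field_simp
        ring
end

section
/- Fix an integer p ≥ 2. The classes of the vectors D^i η_n, for i = 0, 1, …, p−1, generate the quotient group ℤⁿ / image(D^p − 1): every element of ℤⁿ is congruent modulo image(D^p − 1) to a ℤ-linear combination of D^0 η_n, D^1 η_n, …, D^{p−1} η_n. -/
/-!
`ℤⁿ` is the abelian group of functions `Fin n → ℤ` (coordinates `1,…,n`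
corresponding to indices `0,…,n-1`).  `shiftE n` is the shift operator `t`,
`(tη)(i) = η(i+1)` for `i < n` and `(tη)(n) = 0`, and
`DE n = 1 + t + t² + … + t^{n−1}`.
-/

noncomputable section

/-- The shift operator `t` on `ℤⁿ`. -/
def shiftE (n : ℕ) : Module.End ℤ (Fin n → ℤ) :=
  (AddMonoidHom.mk' (fun (η : Fin n → ℤ) (i : Fin n) => if h : (i : ℕ) + 1 < n then η ⟨(i : ℕ) + 1, h⟩ else 0) (by
    intro a b
    funext i
    by_cases h : (i : ℕ) + 1 < n <;> simp [h])).toIntLinearMap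

/-- The operator `D = 1 + t + t² + … + t^{n−1}` on `ℤⁿ`. -/
def DE (n : ℕ) : Module.End ℤ (Fin n → ℤ) := ∑ i ∈ Finset.range n, shiftE n ^ i

lemma shiftE_apply (n : ℕ) (η : Fin n → ℤ) (i : Fin n) :
    shiftE n η i = if h : (i : ℕ) + 1 < n then η ⟨(i : ℕ) + 1, h⟩ else 0 := rfl

lemma shiftE_pow_apply (n k : ℕ) (η : Fin n → ℤ) (i : Fin n) :
    (shiftE n ^ k) η i = if h : (i : ℕ) + k < n then η ⟨(i : ℕ) + k, h⟩ else 0 := by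
  induction k generalizing η with
  | zero => simp
  | succ k ih =>
    rw [pow_succ, Module.End.mul_apply, ih]
    by_cases h : (i : ℕ) + (k + 1) < n
    · have h1 : (i : ℕ) + k < n := by omega
      rw [dif_pos h1, shiftE_apply]
      simp only [Fin.val_mk]
      rw [dif_pos (by omega : (i:ℕ) + k + 1 < n), dif_pos h]
      congr 1
    · by_cases h1 : (i : ℕ) + k < n
      · rw [dif_pos h1, dif_neg h, shiftE_apply]
        simp only [Fin.val_mk]
        rw [dif_neg (by omega : ¬ ((i:ℕ) + k + 1 < n))]
      · rw [dif_neg h1, dif_neg h]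

lemma shiftE_pow_n (n : ℕ) : shiftE n ^ n = 0 := by
  apply LinearMap.ext
  intro η
  funext i
  rw [shiftE_pow_apply, dif_neg (by omega)]
  simp

lemma DE_mul (n : ℕ) : DE n * (1 - shiftE n) = 1 := by
  have h := geom_sum_mul (shiftE n) n
  have : DE n * (1 - shiftE n) = -((∑ i ∈ Finset.range n, shiftE n ^ i) * (shiftE n - 1)) := by
    rw [DE]; noncomm_ring
  rw [this, h, shiftE_pow_n]; noncomm_ring

lemma mul_DE (n : ℕ) : (1 - shiftE n) * DE n = 1 := by
  have h := mul_geom_sum (shiftE n) n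
  have : (1 - shiftE n) * DE n = -((shiftE n - 1) * (∑ i ∈ Finset.range n, shiftE n ^ i)) := by
    rw [DE]; noncomm_ring
  rw [this, h, shiftE_pow_n]; noncomm_ring

lemma commute_shift_DE (n : ℕ) : Commute (shiftE n) (DE n) :=
  Commute.sum_right _ _ _ (fun i _ => (Commute.refl (shiftE n)).pow_right i)

lemma pow_single (n : ℕ) (hn : 1 ≤ n) (j : Fin n) :
    (shiftE n ^ (n - 1 - (j : ℕ))) (Pi.single (⟨n - 1, by omega⟩ : Fin n) (1 : ℤ)) =
      Pi.single j (1 : ℤ) := by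
  have hi : (j : ℕ) < n := j.isLt
  funext i
  have hi' : (i : ℕ) < n := i.isLt
  rw [shiftE_pow_apply]
  by_cases h : (i : ℕ) + (n - 1 - (j : ℕ)) < n
  · rw [dif_pos h]
    simp only [Pi.single_apply, Fin.ext_iff, Fin.val_mk]
    split_ifs <;> first | rfl | omega
  · rw [dif_neg h]
    simp only [Pi.single_apply, Fin.ext_iff]
    rw [if_neg (by omega)]

/-- For `p ≥ 2`, the classes of `D^i η_n`, `i = 0, …, p−1`, generate the quotient
`ℤⁿ / image(D^p − 1)`: every element of `ℤⁿ` is congruent modulo `image(D^p − 1)`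
to a `ℤ`-linear combination of `D^0 η_n, …, D^{p−1} η_n`. -/
theorem quotient_generated_by_Dpow_etaN (n : ℕ) (hn : 2 ≤ n) (p : ℕ) (hp : 2 ≤ p) :
    ∀ x : Fin n → ℤ, ∃ c : Fin p → ℤ,
      x - ∑ i : Fin p,
          c i • (DE n ^ (i : ℕ)) (Pi.single (⟨n - 1, by omega⟩ : Fin n) (1 : ℤ)) ∈
        LinearMap.range (DE n ^ p - 1) := by
  intro x
  set η : Fin n → ℤ := Pi.single (⟨n - 1, by omega⟩ : Fin n) (1 : ℤ) with hηdef
  set v : Fin p → (Fin n → ℤ) := fun i => (DE n ^ (i : ℕ)) η with hvdef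
  set T : Submodule ℤ (Fin n → ℤ) :=
    LinearMap.range (DE n ^ p - 1) ⊔ Submodule.span ℤ (Set.range v) with hT
  have hRle : LinearMap.range (DE n ^ p - 1) ≤ T := le_sup_left
  have hvmem : ∀ i : Fin p, v i ∈ T := fun i =>
    Submodule.mem_sup_right (Submodule.subset_span ⟨i, rfl⟩)
  have hc : Commute (1 - shiftE n) (DE n ^ p - 1) :=
    (((Commute.one_left _).sub_left ((commute_shift_DE n).pow_right p))).sub_right
      (Commute.one_right _)
  have hD : DE n ^ p * (1 - shiftE n) = DE n ^ (p - 1) := by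
    have h1 : DE n ^ p = DE n ^ (p - 1) * DE n := by
      rw [← pow_succ]; congr 1; omega
    rw [h1, mul_assoc, DE_mul, mul_one]
  -- generators are stable under (1 - t)
  have hgen : ∀ i : Fin p, (1 - shiftE n) (v i) ∈ T := by
    rintro ⟨iv, hiv⟩
    match iv, hiv with
    | 0, hiv =>
      have key : (1 - shiftE n) (v ⟨0, hiv⟩) =
          v ⟨p - 1, by omega⟩ - (DE n ^ p - 1) ((1 - shiftE n) η) := by
        have e1 : v ⟨0, hiv⟩ = η := by simp [hvdef]
        have e2 : (DE n ^ p - 1) ((1 - shiftE n) η) =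
            (DE n ^ (p - 1)) η - (1 - shiftE n) η := by
          rw [LinearMap.sub_apply, Module.End.one_apply, ← Module.End.mul_apply, hD]
        have e3 : v ⟨p - 1, by omega⟩ = (DE n ^ (p - 1)) η := by simp [hvdef]
        rw [e1, e3, e2]
        abel
      rw [key]
      exact T.sub_mem (hvmem _) (hRle ⟨_, rfl⟩)
    | k + 1, hiv =>
      have key : (1 - shiftE n) (v ⟨k + 1, hiv⟩) = v ⟨k, by omega⟩ := by
        simp only [hvdef, Fin.val_mk]
        rw [← Module.End.mul_apply]
        congr 1
        rw [pow_succ', ← mul_assoc, mul_DE, one_mul]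
      rw [key]
      exact hvmem _
  have hinv : ∀ y ∈ T, (1 - shiftE n) y ∈ T := by
    intro y hy
    rcases Submodule.mem_sup.mp hy with ⟨a, ha, b, hb, rfl⟩
    rw [map_add]
    refine T.add_mem ?_ ?_
    · rcases ha with ⟨w, rfl⟩
      rw [← Module.End.mul_apply, hc.eq, Module.End.mul_apply]
      exact hRle ⟨_, rfl⟩
    · refine Submodule.span_induction ?_ ?_ ?_ ?_ hb
      · rintro z ⟨i, rfl⟩; exact hgen i
      · simp
      · intro a b _ _ ha hb; rw [map_add]; exact T.add_mem ha hb
      · intro r a _ ha; rw [map_smul]; exact T.smul_mem r ha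
  have hinvT : ∀ y ∈ T, shiftE n y ∈ T := by
    intro y hy
    have hy' : shiftE n y = y - (1 - shiftE n) y := by
      simp [LinearMap.sub_apply]
    rw [hy']
    exact T.sub_mem hy (hinv y hy)
  have hpow : ∀ (k : ℕ), ∀ y ∈ T, (shiftE n ^ k) y ∈ T := by
    intro k
    induction k with
    | zero => intro y hy; simpa using hy
    | succ k ih =>
      intro y hy
      rw [pow_succ, Module.End.mul_apply]
      exact ih _ (hinvT y hy)
  have hη : η ∈ T := by
    have h0 := hvmem ⟨0, by omega⟩
    simpa [hvdef] using h0
  have hsingle : ∀ j : Fin n, Pi.single j (1 : ℤ) ∈ T := by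
    intro j
    rw [← pow_single n (by omega) j]
    exact hpow _ _ hη
  have hx : x ∈ T := by
    have hxsum : x = ∑ j : Fin n, x j • Pi.single j (1 : ℤ) := by
      conv_lhs => rw [← Finset.univ_sum_single x]
      refine Finset.sum_congr rfl fun j _ => ?_
      rw [← Pi.single_smul, smul_eq_mul, mul_one]
    rw [hxsum]
    exact Submodule.sum_mem _ fun j _ => T.smul_mem _ (hsingle j)
  rcases Submodule.mem_sup.mp hx with ⟨y, hy, z, hz, hsum⟩
  rcases (Submodule.mem_span_range_iff_exists_fun ℤ).mp hz with ⟨c, hc2⟩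
  refine ⟨c, ?_⟩
  have hgoal : x - ∑ i, c i • v i = y := by
    rw [← hsum, ← hc2]; abel
  rw [show (∑ i : Fin p, c i • (DE n ^ (i : ℕ)) η) = ∑ i, c i • v i from rfl]
  rw [hgoal]
  exact hy
end
end
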